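/- arXiv:1908.02657 — 2 statements merged into one kernel-verified Lean document; each statement's English description precedes it below -/
import Mathlib

section
/- Let 0 < a < 1/8 and let u solve u'' + u' + a·u = 0 with u(0) = u₀, u'(0) = u₁. Then there exists a constant C > 0, independent of a, u₀, u₁, such that |u'(t)| ≤ C·( a·e^{-a t}(|u₀| + |u₁|) + e^{-t/2}|u₁| ) for all t ≥ 0. -/
/-!
The characteristic polynomial `X² + X + a` has real roots `r₂ < r₁ < 0` with `-2a ≤ r₁ ≤ -a`,
so `r₂ = -1 - r₁ ≤ -1/2`. Factoring the equation as `(D - r₂)(D - r₁) u = 0`, both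
`u' - r₁ u` and `u' - r₂ u` solve first-order equations and are explicit exponentials; eliminating
`u` gives `(r₁ - r₂) u'(t) = r₁ e^{r₁ t} (u₁ - r₂ u₀) - r₂ e^{r₂ t} (u₁ - r₁ u₀)`. The slow mode
carries the small factor `|r₁| ≤ 2a`, and the fast mode decays like `e^{-t/2}` except for its
`r₁ u₀` part, which is again of size `a`. Since `r₁ - r₂ ≥ 1/2`, the constant `C = 8` works.
-/

open Complex

theorem eq_exp_smul_of_hasDerivAt {E : Type*} [NormedAddCommGroup E] [NormedSpace ℂ E]
    {f : ℝ → E} {r : ℂ} (hf : ∀ t, 0 ≤ t → HasDerivAt f (r • f t) t) {t : ℝ} (ht : 0 ≤ t) :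
    f t = exp (r * t) • f 0 := by
  set g : ℝ → E := fun s => exp (-r * s) • f s
  have hg : ∀ s, 0 ≤ s → HasDerivAt g 0 s := fun s hs => by
    have hexp : HasDerivAt (fun s : ℝ => exp (-r * s)) (exp (-r * s) * -r) s := by
      simpa using ((ofRealCLM.hasDerivAt (x := s)).const_mul (-r)).cexp
    refine (hexp.smul (hf s hs)).congr_deriv ?_
    rw [smul_smul, ← add_smul, mul_neg, add_neg_cancel, zero_smul]
  have hconst := constant_of_has_deriv_right_zero
    (fun s hs => (hg s hs.1).continuousAt.continuousWithinAt)
    (fun s hs => (hg s hs.1).hasDerivWithinAt) t ⟨ht, le_rfl⟩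
  calc f t = exp (r * t) • g t := by simp [g, smul_smul, ← Complex.exp_add]
    _ = exp (r * t) • f 0 := by rw [hconst]; simp [g]

theorem hasDerivAt_deriv_sub_mul_self {u : ℝ → ℂ} {r₁ r₂ : ℂ} {t : ℝ}
    (hu : DifferentiableAt ℝ u t) (hu' : DifferentiableAt ℝ (deriv u) t)
    (hode : deriv (deriv u) t - (r₁ + r₂) * deriv u t + r₁ * r₂ * u t = 0) :
    HasDerivAt (fun s => deriv u s - r₁ * u s) (r₂ * (deriv u t - r₁ * u t)) t :=
  (hu'.hasDerivAt.sub (hu.hasDerivAt.const_mul r₁)).congr_deriv (by linear_combination hode)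

theorem sub_mul_deriv_eq_of_ode {u : ℝ → ℂ} {r₁ r₂ : ℂ}
    (hu : ∀ t, 0 ≤ t → DifferentiableAt ℝ u t)
    (hu' : ∀ t, 0 ≤ t → DifferentiableAt ℝ (deriv u) t)
    (hode : ∀ t, 0 ≤ t → deriv (deriv u) t - (r₁ + r₂) * deriv u t + r₁ * r₂ * u t = 0)
    {t : ℝ} (ht : 0 ≤ t) :
    (r₁ - r₂) * deriv u t = r₁ * exp (r₁ * t) * (deriv u 0 - r₂ * u 0)
      - r₂ * exp (r₂ * t) * (deriv u 0 - r₁ * u 0) := by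
  have hw := eq_exp_smul_of_hasDerivAt (f := fun s => deriv u s - r₁ * u s) (r := r₂)
    (fun s hs => hasDerivAt_deriv_sub_mul_self (hu s hs) (hu' s hs) (hode s hs)) ht
  have hv := eq_exp_smul_of_hasDerivAt (f := fun s => deriv u s - r₂ * u s) (r := r₁)
    (fun s hs => hasDerivAt_deriv_sub_mul_self (hu s hs) (hu' s hs)
      (by linear_combination hode s hs)) ht
  simp only [smul_eq_mul] at hw hv
  linear_combination r₁ * hv - r₂ * hw

theorem norm_ofReal_mul_exp_mul (r t : ℝ) (z : ℂ) :
    ‖(r : ℂ) * exp (r * t) * z‖ = |r| * Real.exp (r * t) * ‖z‖ := by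
  rw [norm_mul, norm_mul, norm_real, Real.norm_eq_abs, ← ofReal_mul, norm_exp_ofReal]

theorem norm_sub_ofReal_mul_le (z w : ℂ) {r : ℝ} (hr : r ≤ 0) :
    ‖z - r * w‖ ≤ ‖z‖ + -r * ‖w‖ :=
  calc ‖z - r * w‖ ≤ ‖z‖ + ‖(r : ℂ) * w‖ := norm_sub_le _ _
    _ = ‖z‖ + -r * ‖w‖ := by rw [norm_mul, norm_real, Real.norm_eq_abs, abs_of_nonpos hr]

theorem mul_norm_deriv_le_of_ode {u : ℝ → ℂ} {r₁ r₂ : ℝ} (hr₂₁ : r₂ ≤ r₁) (hr₁ : r₁ ≤ 0)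
    (hu : ∀ t, 0 ≤ t → DifferentiableAt ℝ u t)
    (hu' : ∀ t, 0 ≤ t → DifferentiableAt ℝ (deriv u) t)
    (hode : ∀ t, 0 ≤ t → deriv (deriv u) t - (r₁ + r₂) * deriv u t + r₁ * r₂ * u t = 0)
    {t : ℝ} (ht : 0 ≤ t) :
    (r₁ - r₂) * ‖deriv u t‖ ≤ -r₁ * Real.exp (r₁ * t) * (‖deriv u 0‖ + -r₂ * ‖u 0‖)
      + -r₂ * Real.exp (r₂ * t) * (‖deriv u 0‖ + -r₁ * ‖u 0‖) := by
  have h := norm_sub_le ((r₁ : ℂ) * exp (r₁ * t) * (deriv u 0 - r₂ * u 0))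
    ((r₂ : ℂ) * exp (r₂ * t) * (deriv u 0 - r₁ * u 0))
  rw [← sub_mul_deriv_eq_of_ode hu hu' hode ht, norm_ofReal_mul_exp_mul, norm_ofReal_mul_exp_mul,
    ← ofReal_sub, norm_mul, norm_real, Real.norm_eq_abs, abs_of_nonneg (by linarith),
    abs_of_nonpos hr₁, abs_of_nonpos (by linarith)] at h
  refine h.trans (add_le_add ?_ ?_) <;>
    exact mul_le_mul_of_nonneg_left (norm_sub_ofReal_mul_le _ _ (by linarith))
      (mul_nonneg (by linarith) (Real.exp_pos _).le)

theorem exists_add_eq_neg_one_mul_eq {a : ℝ} (ha₀ : 0 ≤ a) (ha₁ : a ≤ 1 / 4) :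
    ∃ r₁ r₂ : ℝ, r₁ + r₂ = -1 ∧ r₁ * r₂ = a ∧ -(2 * a) ≤ r₁ ∧ r₁ ≤ -a := by
  set s := √(1 - 4 * a)
  have hs : s ^ 2 = 1 - 4 * a := Real.sq_sqrt (by linarith)
  have hs₀ : 0 ≤ s := Real.sqrt_nonneg _
  refine ⟨(-1 + s) / 2, (-1 - s) / 2, by ring, by linear_combination -hs / 4, ?_, ?_⟩ <;> nlinarith

theorem damped_ode_low_freq_decay_deriv :
    ∃ C : ℝ, 0 < C ∧
      ∀ a : ℝ, 0 < a → a < 1/8 → ∀ u : ℝ → ℂ,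
        (∀ t : ℝ, 0 ≤ t → DifferentiableAt ℝ u t) →
        (∀ t : ℝ, 0 ≤ t → DifferentiableAt ℝ (deriv u) t) →
        (∀ t : ℝ, 0 ≤ t → deriv (deriv u) t + deriv u t + (a:ℂ) * u t = 0) →
        ∀ u₀ u₁ : ℂ, u 0 = u₀ → deriv u 0 = u₁ →
        ∀ t : ℝ, 0 ≤ t →
          ‖deriv u t‖
            ≤ C * (a * Real.exp (-a*t) * (‖u₀‖ + ‖u₁‖)
                    + Real.exp (-t/2) * ‖u₁‖) := by
  refine ⟨8, by norm_num, ?_⟩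
  rintro a ha ha' u hu hu' hode _ _ rfl rfl t ht
  obtain ⟨r₁, r₂, hsum, hprod, hr₁_ge, hr₁_le⟩ := exists_add_eq_neg_one_mul_eq ha.le (by linarith)
  have hnorm := mul_norm_deriv_le_of_ode (r₁ := r₁) (r₂ := r₂) (by linarith) (by linarith)
    hu hu' (fun s hs => by
      rw [← ofReal_add, hsum, ← ofReal_mul, hprod]
      push_cast
      linear_combination hode s hs) ht
  have hexp₁ : Real.exp (r₁ * t) ≤ Real.exp (-a * t) := by gcongr
  have hexp₂ : Real.exp (r₂ * t) ≤ Real.exp (-t / 2) := by rw [Real.exp_le_exp]; nlinarith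
  have hexp₃ : Real.exp (-t / 2) * ‖u 0‖ ≤ Real.exp (-a * t) * ‖u 0‖ := by gcongr; nlinarith
  have hbound : (r₁ - r₂) * ‖deriv u t‖ ≤ 2 * a * Real.exp (-a * t) * (‖deriv u 0‖ + 1 * ‖u 0‖)
      + 1 * Real.exp (-t / 2) * (‖deriv u 0‖ + 2 * a * ‖u 0‖) := by
    refine hnorm.trans ?_
    gcongr <;> nlinarith [norm_nonneg (u 0), norm_nonneg (deriv u 0)]
  calc ‖deriv u t‖ ≤ 2 * ((r₁ - r₂) * ‖deriv u t‖) := by nlinarith [norm_nonneg (deriv u t)]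
    _ ≤ _ := by
      have := mul_le_mul_of_nonneg_left hexp₃ ha.le
      have := mul_nonneg (mul_nonneg ha.le (Real.exp_pos (-a * t)).le) (norm_nonneg (deriv u 0))
      have := mul_nonneg (Real.exp_pos (-t / 2)).le (norm_nonneg (deriv u 0))
      linarith
end

section
/- Let a > 0 and let u solve u'' + u' + a·u = 0 with u(0) = u₀, u'(0) = u₁. Then there exists a constant C > 0, independent of a, u₀, u₁, such that |u(t)| ≤ C(|u₀| + |u₁|) for all t ≥ 0. -/
/-!
With `v = u + u'` the equation becomes the first-order system `u' = v - u`, `v' = -a u`, whose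
energy `‖v‖² + a‖u‖²` has derivative `-2a‖u‖² ≤ 0`. For `a ≥ 1` the energy bounds `u` directly.
For `a ≤ 1` it bounds `v` uniformly, and `u' + u = v` with `(eˢ u)' = eˢ v` shows that `u` never
exceeds the larger of `‖u 0‖` and that bound.
-/

open Set

open scoped RealInnerProductSpace

lemma le_add_of_sq_le_sq_add_sq {x p q : ℝ} (hp : 0 ≤ p) (hq : 0 ≤ q) (h : x ^ 2 ≤ p ^ 2 + q ^ 2) :
    x ≤ p + q := by
  nlinarith [mul_nonneg hp hq]

lemma norm_le_max_of_norm_add_deriv_le {E : Type*} [NormedAddCommGroup E] [NormedSpace ℝ E]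
    {f f' : ℝ → E} {M t : ℝ} (ht : 0 ≤ t) (hf : ∀ s ∈ Icc 0 t, HasDerivAt f (f' s) s)
    (hM : ∀ s ∈ Ico 0 t, ‖f s + f' s‖ ≤ M) :
    ‖f t‖ ≤ max ‖f 0‖ M := by
  set K := max ‖f 0‖ M
  have hexp_f : ∀ s ∈ Ico 0 t,
      HasDerivWithinAt (fun s => Real.exp s • f s) (Real.exp s • (f s + f' s)) (Ici s) s := by
    intro s hs
    have h := (Real.hasDerivAt_exp s).smul (hf s (Ico_subset_Icc_self hs))
    rw [add_comm, ← smul_add] at h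
    exact h.hasDerivWithinAt
  have hbound := image_norm_le_of_norm_deriv_right_le_deriv_boundary
    (f := fun s => Real.exp s • f s) (B := fun s => K * Real.exp s)
    (fun s hs => ((Real.continuous_exp.continuousAt).smul (hf s hs).continuousAt).continuousWithinAt)
    hexp_f (by simp [K]) (fun s => (Real.hasDerivAt_exp s).const_mul K)
    (fun s hs => by
      rw [norm_smul, Real.norm_of_nonneg (Real.exp_pos s).le, mul_comm]
      gcongr
      exact (hM s hs).trans (le_max_right _ _))
    ⟨ht, le_rfl⟩
  rw [norm_smul, Real.norm_of_nonneg (Real.exp_pos t).le, mul_comm] at hbound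
  exact le_of_mul_le_mul_right hbound (Real.exp_pos t)

section DampedSystem

variable {E : Type*} [NormedAddCommGroup E] [InnerProductSpace ℝ E] {u v : ℝ → E} {a : ℝ}

lemma hasDerivAt_dampedEnergy {s : ℝ} (hu : HasDerivAt u (v s - u s) s)
    (hv : HasDerivAt v (-(a • u s)) s) :
    HasDerivAt (fun s => ‖v s‖ ^ 2 + a * ‖u s‖ ^ 2) (-(2 * a * ‖u s‖ ^ 2)) s := by
  refine (hv.norm_sq.add (hu.norm_sq.const_mul a)).congr_deriv ?_
  rw [inner_neg_right, real_inner_smul_right, inner_sub_right, real_inner_comm (v s),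
    real_inner_self_eq_norm_sq]
  ring

lemma dampedEnergy_le (ha : 0 ≤ a) (hu : ∀ s, 0 ≤ s → HasDerivAt u (v s - u s) s)
    (hv : ∀ s, 0 ≤ s → HasDerivAt v (-(a • u s)) s) {t : ℝ} (ht : 0 ≤ t) :
    ‖v t‖ ^ 2 + a * ‖u t‖ ^ 2 ≤ ‖v 0‖ ^ 2 + a * ‖u 0‖ ^ 2 := by
  have hderiv (s : ℝ) (hs : 0 ≤ s) := hasDerivAt_dampedEnergy (hu s hs) (hv s hs)
  refine antitoneOn_of_hasDerivWithinAt_nonpos (convex_Ici 0)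
    (fun s hs => (hderiv s hs).continuousAt.continuousWithinAt)
    (fun s hs => (hderiv s (interior_subset hs)).hasDerivWithinAt)
    (fun s _ => by have := sq_nonneg ‖u s‖; nlinarith) self_mem_Ici ht ht

theorem norm_le_of_dampedSystem (ha : 0 < a) (hu : ∀ s, 0 ≤ s → HasDerivAt u (v s - u s) s)
    (hv : ∀ s, 0 ≤ s → HasDerivAt v (-(a • u s)) s) {t : ℝ} (ht : 0 ≤ t) :
    ‖u t‖ ≤ ‖v 0‖ + ‖u 0‖ := by
  have henergy {s : ℝ} (hs : 0 ≤ s) := dampedEnergy_le ha.le hu hv hs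
  rcases le_total 1 a with h1a | ha1
  · refine le_add_of_sq_le_sq_add_sq (norm_nonneg _) (norm_nonneg _) ?_
    have := henergy ht
    nlinarith [sq_nonneg ‖v t‖, sq_nonneg ‖v 0‖]
  · have hv_bound : ∀ s ∈ Ico 0 t, ‖u s + (v s - u s)‖ ≤ ‖v 0‖ + ‖u 0‖ := by
      intro s hs
      rw [add_sub_cancel]
      refine le_add_of_sq_le_sq_add_sq (norm_nonneg _) (norm_nonneg _) ?_
      have := henergy hs.1
      nlinarith [sq_nonneg ‖u s‖, sq_nonneg ‖u 0‖]
    calc ‖u t‖ ≤ max ‖u 0‖ (‖v 0‖ + ‖u 0‖) :=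
          norm_le_max_of_norm_add_deriv_le ht (fun s hs => hu s hs.1) hv_bound
      _ = ‖v 0‖ + ‖u 0‖ := max_eq_right (by simp)

end DampedSystem

theorem damped_ode_uniform_bound :
    ∃ C : ℝ, 0 < C ∧
      ∀ a : ℝ, 0 < a → ∀ u : ℝ → ℂ,
        (∀ t : ℝ, 0 ≤ t → DifferentiableAt ℝ u t) →
        (∀ t : ℝ, 0 ≤ t → DifferentiableAt ℝ (deriv u) t) →
        (∀ t : ℝ, 0 ≤ t → deriv (deriv u) t + deriv u t + (a:ℂ) * u t = 0) →
        ∀ u₀ u₁ : ℂ, u 0 = u₀ → deriv u 0 = u₁ →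
        ∀ t : ℝ, 0 ≤ t →
          ‖u t‖ ≤ C * (‖u₀‖ + ‖u₁‖) := by
  refine ⟨2, two_pos, ?_⟩
  rintro a ha u hu hu' hode u₀ u₁ rfl rfl t ht
  have hbound := norm_le_of_dampedSystem (v := u + deriv u) ha
    (fun s hs => (hu s hs).hasDerivAt.congr_deriv (by simp))
    (fun s hs => ((hu s hs).hasDerivAt.add (hu' s hs).hasDerivAt).congr_deriv <| by
      rw [Complex.real_smul]
      linear_combination hode s hs)
    ht
  simp only [Pi.add_apply] at hbound
  linarith [norm_add_le (u 0) (deriv u 0), norm_nonneg (deriv u 0)]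
end
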